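/- For integers t and t', if there exists a matrix M in GL(2,ℤ) such that Mᵀ · χ_t · M = χ_{t'}, where χ_t is the 2×2 integer matrix with rows (t, 1) and (-1, 0), then t = t'. -/

import Mathlib

/-!
Writing `M = [[a, b], [c, d]]`, the form `Mᵀ χ_t M` has diagonal `(t a², t b²)` and
antisymmetric part `det M`. Its `(1,1)` entry forces `t = 0` or `b = 0`; in the second case the
`(0,1)` entry reads `a d = 1`, so `a = ±1` and the `(0,0)` entry gives `t' = t a² = t`.
-/

open Matrix

/-- The bilinear form `χ_t = [[t, 1], [-1, 0]]` on `ℤ²`. -/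
def chi (t : ℤ) : Matrix (Fin 2) (Fin 2) ℤ := !![t, 1; -1, 0]

theorem transpose_mul_chi_mul (t : ℤ) (M : Matrix (Fin 2) (Fin 2) ℤ) :
    Mᵀ * chi t * M =
      !![t * M 0 0 ^ 2, t * M 0 0 * M 0 1 + M.det; t * M 0 0 * M 0 1 - M.det, t * M 0 1 ^ 2] := by
  ext i j
  fin_cases i <;> fin_cases j <;>
    simp [chi, Matrix.mul_apply, Fin.sum_univ_two, Matrix.det_fin_two] <;> ring

theorem eq_of_transpose_mul_chi_mul_eq {t t' : ℤ} (M : Matrix (Fin 2) (Fin 2) ℤ)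
    (h : Mᵀ * chi t * M = chi t') : t = t' := by
  rw [transpose_mul_chi_mul] at h
  have h00 : t * M 0 0 ^ 2 = t' := by simpa [chi] using congrFun (congrFun h 0) 0
  have h01 : t * M 0 0 * M 0 1 + M.det = 1 := by simpa [chi] using congrFun (congrFun h 0) 1
  have h11 : t * M 0 1 ^ 2 = 0 := by simpa [chi] using congrFun (congrFun h 1) 1
  rcases mul_eq_zero.mp h11 with rfl | hb2
  · simpa using h00
  have hb : M 0 1 = 0 := pow_eq_zero_iff (n := 2) two_ne_zero |>.mp hb2
  have had : M 0 0 * M 1 1 = 1 := by simpa [Matrix.det_fin_two, hb] using h01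
  have ha : M 0 0 ^ 2 = 1 := by
    rcases Int.eq_one_or_neg_one_of_mul_eq_one had with ha | ha <;> simp [ha]
  simpa [ha] using h00

/-- If `χ_t` and `χ_{t'}` are equivalent via some `M ∈ GL(2, ℤ)`,
i.e. `Mᵀ * χ_t * M = χ_{t'}`, then `t = t'`. -/
theorem stmt0 (t t' : ℤ)
    (h : ∃ M : Matrix.GeneralLinearGroup (Fin 2) ℤ,
      (M : Matrix (Fin 2) (Fin 2) ℤ)ᵀ * chi t * (M : Matrix (Fin 2) (Fin 2) ℤ) = chi t') :
    t = t' := by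
  obtain ⟨M, hM⟩ := h
  exact eq_of_transpose_mul_chi_mul_eq M hM
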